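/- arXiv:1501.04669 — 2 statements merged into one kernel-verified Lean document; each statement's English description precedes it below -/
import Mathlib

section
/- Let $E = \{e_0, e_1, \dots, e_N, e_0 - e_1, e_1 - e_2, \dots, e_{N-1} - e_N, \zeta\} \subset \mathbb{R}^{N+1}$ where $N \ge 2$, $e_j$ are the standard basis vectors, and $\zeta = \sum_{j=0}^N (-1)^j e_j$. Then for every pair of distinct vectors $(v,w)$ from $E$, there exist two subsets $B_1, B_2 \subset E$, each of which is a basis of $\mathbb{R}^{N+1}$, such that $B_1 \cap B_2 = \{v\}$ and $E \setminus (B_1 \cup B_2) = \{w\}$. -/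
open Finset

/-- The `j`-th standard basis vector of `ℝ^{N+1}` (as `Fin (N+1) → ℝ`), indexed by `j : ℕ`. -/
noncomputable def stdv (N : ℕ) (j : ℕ) : Fin (N + 1) → ℝ :=
  fun i => if (i : ℕ) = j then 1 else 0

/-- `ζ = ∑_{j=0}^N (-1)^j e_j`. -/
noncomputable def zeta1 (N : ℕ) : Fin (N + 1) → ℝ :=
  ∑ j ∈ Finset.range (N + 1), ((-1 : ℝ) ^ j) • stdv N j

/-- The set `E₁ = {e₀,…,e_N} ∪ {e₀-e₁,…,e_{N-1}-e_N} ∪ {ζ}`. -/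
noncomputable def E1set (N : ℕ) : Set (Fin (N + 1) → ℝ) :=
  {x | ∃ j ≤ N, x = stdv N j} ∪ {x | ∃ j < N, x = stdv N j - stdv N (j + 1)} ∪ {zeta1 N}

/-!
Index `E` injectively by `Fin (N + 1) ⊕ Fin N ⊕ Unit`; since `E` has `2 (N + 1)` elements, it
suffices to find an index set `S ∋ a` with `b ∉ S` such that both `S` and `(Sᶜ \ {b}) ∪ {a}`
index spanning sets: a counting argument then makes both of them bases, and the two
set identities hold by construction. Spanning is checked by recovering every `e_j`:
a run of consecutive differences `e_j - e_{j+1}` propagates one known `e_m` along an interval,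
and `ζ` recovers the last missing `e_m` since its coefficients `±1` never vanish.
-/

open Set Submodule Module Function

section BasisPair

variable {K V ι : Type*} [Field K] [AddCommGroup V] [Module K V] [Finite ι] {u : ι → V}

theorem finrank_le_ncard_of_span_image_eq_top {S : Set ι} (hS : span K (u '' S) = ⊤) :
    finrank K V ≤ S.ncard := by
  have := Fintype.ofFinite S
  calc finrank K V = finrank K (span K (range (u ∘ ((↑) : S → ι)))) := by
        rw [range_comp, Subtype.range_coe, hS, finrank_top]
    _ ≤ Fintype.card S := finrank_range_le_card _
    _ = S.ncard := by rw [← Nat.card_coe_set_eq, Nat.card_eq_fintype_card]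

theorem linearIndependent_image_of_span_eq_top {S : Set ι}
    (hS : span K (u '' S) = ⊤) (hcard : S.ncard ≤ finrank K V) :
    LinearIndependent K ((↑) : u '' S → V) := by
  have := Fintype.ofFinite S
  have hli : LinearIndepOn K u S :=
    linearIndependent_of_top_le_span_of_card_le_finrank
      (by rw [← image_eq_range, hS])
      (by rwa [← Nat.card_eq_fintype_card, Nat.card_coe_set_eq])
  exact hli.id_image

variable (K) in
/-- The two spanning sets `u '' S` and `u '' insert a (Sᶜ \ {b})` have at least `finrank K V`
elements each and `2 * finrank K V` together, so each has exactly `finrank K V` and is a basis. -/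
theorem exists_basis_pair (hu : Injective u) (hcard : Nat.card ι = 2 * finrank K V)
    {S : Set ι} {a b : ι} (ha : a ∈ S) (hb : b ∉ S) (hS : span K (u '' S) = ⊤)
    (hT : span K (u '' insert a (Sᶜ \ {b})) = ⊤) :
    ∃ B₁ B₂ : Set V, B₁ ⊆ range u ∧ B₂ ⊆ range u ∧
      (LinearIndependent K ((↑) : B₁ → V) ∧ span K B₁ = ⊤) ∧
      (LinearIndependent K ((↑) : B₂ → V) ∧ span K B₂ = ⊤) ∧
      B₁ ∩ B₂ = {u a} ∧ range u \ (B₁ ∪ B₂) = {u b} := by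
  set T := insert a (Sᶜ \ {b})
  have hab : a ≠ b := ne_of_mem_of_not_mem ha hb
  have hcardST : S.ncard + T.ncard = 2 * finrank K V := by
    rw [ncard_insert_of_notMem (by simp [ha]), ncard_sdiff_singleton_add_one (by simpa using hb),
      ncard_add_ncard_compl, hcard]
  have h₁ := finrank_le_ncard_of_span_image_eq_top hS
  have h₂ := finrank_le_ncard_of_span_image_eq_top hT
  refine ⟨u '' S, u '' T, image_subset_range _ _, image_subset_range _ _,
    ⟨linearIndependent_image_of_span_eq_top hS (by omega), hS⟩,
    ⟨linearIndependent_image_of_span_eq_top hT (by omega), hT⟩, ?_, ?_⟩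
  · rw [← image_inter hu, ← image_singleton]
    congr 1
    ext x
    by_cases hx : x = a <;> by_cases hxS : x ∈ S <;> simp [T, hx, hxS, ha]
  · rw [← image_union, range_sdiff_image hu, ← image_singleton]
    congr 1
    ext x
    by_cases hx : x = b <;> by_cases hxS : x ∈ S <;> simp [T, hx, hxS, hb, hab.symm]

end BasisPair

section Chain

variable {R M : Type*} [Ring R] [AddCommGroup M] [Module R M] {W : Submodule R M}

theorem Submodule.mem_of_sub_succ_mem {x : ℕ → M} {a m b : ℕ} (ham : a ≤ m) (hmb : m ≤ b)
    (hsub : ∀ j, a ≤ j → j < b → x j - x (j + 1) ∈ W) (hm : x m ∈ W) :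
    ∀ j, a ≤ j → j ≤ b → x j ∈ W := by
  intro j haj hjb
  rcases le_total m j with hmj | hjm
  · induction j, hmj using Nat.le_induction with
    | base => exact hm
    | succ j hmj ih =>
      simpa using W.sub_mem (ih (by omega) (by omega)) (hsub j (by omega) (by omega))
  · induction hjm using Nat.decreasingInduction with
    | self => exact hm
    | of_succ j hj ih =>
      simpa using W.add_mem (hsub j haj (by omega)) (ih (by omega) (by omega))

end Chain

theorem Submodule.mem_of_sum_smul_mem {K M ι : Type*} [Field K] [AddCommGroup M] [Module K M]
    {W : Submodule K M} {s : Finset ι} {c : ι → K} {x : ι → M} {m : ι} (hm : m ∈ s)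
    (hc : c m ≠ 0) (hsum : ∑ j ∈ s, c j • x j ∈ W) (hx : ∀ j ∈ s, j ≠ m → x j ∈ W) :
    x m ∈ W := by
  classical
  rw [← Finset.add_sum_erase _ _ hm] at hsum
  have hrest : ∑ j ∈ s.erase m, c j • x j ∈ W :=
    W.sum_mem fun j hj =>
      W.smul_mem _ (hx j (Finset.mem_of_mem_erase hj) (Finset.ne_of_mem_erase hj))
  exact (W.smul_mem_iff hc).1 (by simpa using W.sub_mem hsum hrest)

abbrev E1Index (N : ℕ) := Fin (N + 1) ⊕ Fin N ⊕ Unit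

noncomputable def E1vec (N : ℕ) : E1Index N → Fin (N + 1) → ℝ
  | .inl j => stdv N j
  | .inr (.inl j) => stdv N j - stdv N (j + 1 : ℕ)
  | .inr (.inr ()) => zeta1 N

section E1

variable {N : ℕ}

theorem stdv_apply_self (j : Fin (N + 1)) : stdv N j j = 1 := if_pos rfl

theorem stdv_apply_of_ne {i : Fin (N + 1)} {j : ℕ} (h : (i : ℕ) ≠ j) : stdv N j i = 0 :=
  if_neg h

theorem stdv_eq_single (j : Fin (N + 1)) : stdv N j = Pi.single j 1 := by
  ext i
  simp [stdv, Pi.single_apply, Fin.val_inj]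

theorem zeta1_apply (i : Fin (N + 1)) : zeta1 N i = (-1) ^ (i : ℕ) := by
  simp [zeta1, Finset.sum_apply, stdv, i.isLt]

theorem range_E1vec : Set.range (E1vec N) = E1set N := by
  ext x
  simp only [Set.mem_range, E1set, Set.mem_union, Set.mem_singleton_iff]
  constructor
  · rintro ⟨j | j | ⟨⟩, rfl⟩
    · exact .inl (.inl ⟨j, by omega, rfl⟩)
    · exact .inl (.inr ⟨j, j.isLt, rfl⟩)
    · exact .inr rfl
  · rintro ((⟨j, hj, rfl⟩ | ⟨j, hj, rfl⟩) | rfl)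
    · exact ⟨.inl ⟨j, by omega⟩, rfl⟩
    · exact ⟨.inr (.inl ⟨j, hj⟩), rfl⟩
    · exact ⟨.inr (.inr ()), rfl⟩

theorem nat_card_E1Index : Nat.card (E1Index N) = 2 * Module.finrank ℝ (Fin (N + 1) → ℝ) := by
  simp only [Nat.card_eq_fintype_card, Fintype.card_sum, Fintype.card_fin, Fintype.card_unique,
    finrank_fintype_fun_eq_card]
  ring

theorem zeta1_ne_of_apply_eq_zero {x : Fin (N + 1) → ℝ} {c : Fin (N + 1)} (hx : x c = 0) :
    zeta1 N ≠ x := fun h => by simp [← h, zeta1_apply] at hx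

theorem exists_val_ne_of_two_le (hN : 2 ≤ N) (a b : ℕ) :
    ∃ c : Fin (N + 1), (c : ℕ) ≠ a ∧ (c : ℕ) ≠ b := by
  by_cases h0 : 0 ≠ a ∧ 0 ≠ b
  · exact ⟨0, h0⟩
  by_cases h1 : 1 ≠ a ∧ 1 ≠ b
  · exact ⟨⟨1, by omega⟩, h1⟩
  exact ⟨⟨2, by omega⟩, show 2 ≠ a by omega, show 2 ≠ b by omega⟩

theorem zeta1_ne_E1vec_of_two_le (hN : 2 ≤ N) :
    ∀ x, x ≠ .inr (.inr ()) → zeta1 N ≠ E1vec N x := by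
  rintro (i | i | ⟨⟩) hx
  · obtain ⟨c, hc, -⟩ := exists_val_ne_of_two_le hN i i
    exact zeta1_ne_of_apply_eq_zero (c := c) (stdv_apply_of_ne hc)
  · obtain ⟨c, hc, hc'⟩ := exists_val_ne_of_two_le hN i (i + 1)
    exact zeta1_ne_of_apply_eq_zero (c := c)
      (by simp [E1vec, stdv_apply_of_ne hc, stdv_apply_of_ne hc'])
  · exact absurd rfl hx

theorem stdv_nonneg (j : ℕ) (i : Fin (N + 1)) : 0 ≤ stdv N j i := by
  unfold stdv
  split_ifs <;> norm_num

theorem E1vec_inr_inl_apply_succ (j : Fin N) : E1vec N (.inr (.inl j)) j.succ = -1 := by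
  simp [E1vec, stdv]

theorem E1vec_inr_inl_apply_castSucc (j : Fin N) :
    E1vec N (.inr (.inl j)) j.castSucc = 1 := by
  simp [E1vec, stdv]

theorem E1vec_inr_inl_apply_nonpos {j : Fin N} {i : Fin (N + 1)} (h : (i : ℕ) ≠ j) :
    E1vec N (.inr (.inl j)) i ≤ 0 := by
  simp [E1vec, stdv_apply_of_ne h, stdv_nonneg]

theorem E1vec_injective (hN : 2 ≤ N) : Function.Injective (E1vec N) := by
  rintro (i | i | ⟨⟩) (j | j | ⟨⟩) h
  · by_contra hij
    have := congrFun h i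
    rw [E1vec, E1vec, stdv_apply_self, stdv_apply_of_ne (Fin.val_ne_of_ne (by simpa using hij))]
      at this
    exact one_ne_zero this
  · have := congrFun h j.succ
    rw [E1vec, E1vec_inr_inl_apply_succ] at this
    linarith [stdv_nonneg (N := N) i j.succ]
  · exact absurd h.symm (zeta1_ne_E1vec_of_two_le hN _ (by simp))
  · have := congrFun h i.succ
    rw [E1vec_inr_inl_apply_succ, E1vec] at this
    linarith [stdv_nonneg (N := N) j i.succ]
  · by_contra hij
    have := congrFun h i.castSucc
    rw [E1vec_inr_inl_apply_castSucc] at this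
    linarith [E1vec_inr_inl_apply_nonpos (j := j) (i := i.castSucc)
      (by simpa [Fin.val_inj] using hij)]
  · exact absurd h.symm (zeta1_ne_E1vec_of_two_le hN _ (by simp))
  · exact absurd h (zeta1_ne_E1vec_of_two_le hN _ (by simp))
  · exact absurd h (zeta1_ne_E1vec_of_two_le hN _ (by simp))
  · rfl

end E1

section Spanning

variable {N : ℕ} {W : Submodule ℝ (Fin (N + 1) → ℝ)}

theorem eq_top_of_forall_stdv_mem (h : ∀ j ≤ N, stdv N j ∈ W) : W = ⊤ := by
  rw [eq_top_iff, ← (Pi.basisFun ℝ (Fin (N + 1))).span_eq, Submodule.span_le]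
  rintro _ ⟨j, rfl⟩
  simpa [stdv_eq_single] using h j (by omega)

theorem eq_top_of_zeta1_mem (hz : zeta1 N ∈ W) {m : ℕ} (hm : m ≤ N)
    (h : ∀ j ≤ N, j ≠ m → stdv N j ∈ W) : W = ⊤ := by
  refine eq_top_of_forall_stdv_mem fun j hj => ?_
  rcases eq_or_ne j m with rfl | hjm
  · exact W.mem_of_sum_smul_mem (Finset.mem_range.2 (by omega)) (by simp) hz
      fun i hi hij => h i (by simpa [Nat.lt_succ_iff] using hi) hij
  · exact h j hj hjm

theorem eq_top_of_sub_stdv_mem (hf : ∀ j < N, stdv N j - stdv N (j + 1) ∈ W)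
    {k : ℕ} (hk : k ≤ N) (he : stdv N k ∈ W) : W = ⊤ :=
  eq_top_of_forall_stdv_mem fun j hj =>
    W.mem_of_sub_succ_mem (Nat.zero_le k) hk (fun j _ hj => hf j hj) he j (Nat.zero_le j) hj

theorem eq_top_of_sub_stdv_mem_of_ne {l p q : ℕ} (hpl : p ≤ l) (hlq : l < q)
    (hq : q ≤ N) (hf : ∀ j < N, j ≠ l → stdv N j - stdv N (j + 1) ∈ W)
    (hp : stdv N p ∈ W) (hq' : stdv N q ∈ W) : W = ⊤ := by
  refine eq_top_of_forall_stdv_mem fun j hj => ?_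
  rcases le_or_gt j l with hjl | hjl
  · exact W.mem_of_sub_succ_mem (Nat.zero_le p) hpl
      (fun i _ hi => hf i (by omega) (by omega)) hp j (Nat.zero_le j) hjl
  · exact W.mem_of_sub_succ_mem hlq hq (fun i hi _ => hf i (by omega) (by omega)) hq' j hjl hj

theorem eq_top_of_zeta1_mem_of_sub_stdv_mem (hz : zeta1 N ∈ W) {k p q : ℕ}
    (hk : k < N) (hf : stdv N k - stdv N (k + 1) ∈ W) (hp : p = k ∨ p = k + 1)
    (hqk : q ≠ k) (hqk' : q ≠ k + 1) (hq : q ≤ N)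
    (h : ∀ j ≤ N, j ≠ p → j ≠ q → stdv N j ∈ W) : W = ⊤ := by
  have hk' : ∀ j, k ≤ j → j ≤ k + 1 → stdv N j ∈ W := by
    rcases hp with rfl | rfl
    · exact W.mem_of_sub_succ_mem (Nat.le_succ p) le_rfl
        (fun j hj hj' => by rwa [show j = p by omega]) (h _ (by omega) (by omega) hqk'.symm)
    · exact W.mem_of_sub_succ_mem le_rfl (Nat.le_succ k)
        (fun j hj hj' => by rwa [show j = k by omega]) (h _ (by omega) (by omega) hqk.symm)
  refine eq_top_of_zeta1_mem hz hq fun j hj hjq => ?_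
  by_cases hjp : j = p
  · exact hk' j (by omega) (by omega)
  · exact h j hj hjp hjq

theorem eq_top_of_zeta1_mem_of_sub_stdv_mem_of_pos
    (hz : zeta1 N ∈ W) (hf : ∀ j, 1 ≤ j → j < N → stdv N j - stdv N (j + 1) ∈ W) {m : ℕ}
    (hm : 1 ≤ m) (hmN : m ≤ N) (he : stdv N m ∈ W) : W = ⊤ :=
  eq_top_of_zeta1_mem hz (Nat.zero_le N) fun j hj hj0 =>
    W.mem_of_sub_succ_mem hm hmN hf he j (by omega) hj

end Spanning

section Splits

variable {N : ℕ}

def E1Index.select (P Q : ℕ → Prop) (z : Prop) : Set (E1Index N) :=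
  {x | Sum.elim (fun i : Fin (N + 1) => P i) (Sum.elim (fun j : Fin N => Q j) fun _ => z) x}

@[simp] theorem E1Index.mem_select_inl {P Q : ℕ → Prop} {z : Prop} {i : Fin (N + 1)} :
    .inl i ∈ E1Index.select P Q z ↔ P i := Iff.rfl

@[simp] theorem E1Index.mem_select_inr_inl {P Q : ℕ → Prop} {z : Prop} {j : Fin N} :
    .inr (.inl j) ∈ E1Index.select P Q z ↔ Q j := Iff.rfl

@[simp] theorem E1Index.mem_select_inr_inr {P Q : ℕ → Prop} {z : Prop} {u : Unit} :
    (.inr (.inr u) : E1Index N) ∈ E1Index.select P Q z ↔ z := Iff.rfl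

def SplitsAt (a b : E1Index N) (S : Set (E1Index N)) : Prop :=
  a ∈ S ∧ b ∉ S ∧ span ℝ (E1vec N '' S) = ⊤ ∧ span ℝ (E1vec N '' insert a (Sᶜ \ {b})) = ⊤

section Membership

variable {T : Set (E1Index N)}

theorem stdv_mem_span_E1vec {j : ℕ} (hj : j ≤ N) (h : .inl ⟨j, Nat.lt_succ_of_le hj⟩ ∈ T) :
    stdv N j ∈ span ℝ (E1vec N '' T) :=
  subset_span ⟨_, h, rfl⟩

theorem sub_stdv_mem_span_E1vec {j : ℕ} (hj : j < N) (h : .inr (.inl ⟨j, hj⟩) ∈ T) :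
    stdv N j - stdv N (j + 1) ∈ span ℝ (E1vec N '' T) :=
  subset_span ⟨_, h, rfl⟩

theorem zeta1_mem_span_E1vec (h : .inr (.inr ()) ∈ T) : zeta1 N ∈ span ℝ (E1vec N '' T) :=
  subset_span ⟨_, h, rfl⟩

end Membership

theorem exists_splitsAt_inl_inl {k l : Fin (N + 1)} (hkl : k ≠ l) :
    ∃ S, SplitsAt (.inl k) (.inl l) S := by
  have hkl' : (k : ℕ) ≠ l := Fin.val_ne_of_ne hkl
  refine ⟨E1Index.select (· = k) (fun _ => True) False, by simp, by simpa using hkl'.symm, ?_, ?_⟩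
  · exact eq_top_of_sub_stdv_mem (fun j hj => sub_stdv_mem_span_E1vec hj (by simp)) k.is_le
      (stdv_mem_span_E1vec k.is_le (by simp))
  · exact eq_top_of_zeta1_mem (zeta1_mem_span_E1vec (by simp)) l.is_le
      fun j hj hjl => stdv_mem_span_E1vec hj (by simp [Fin.ext_iff]; omega)

theorem exists_splitsAt_inl_inr_inl (k : Fin (N + 1)) (l : Fin N) :
    ∃ S, SplitsAt (.inl k) (.inr (.inl l)) S := by
  obtain ⟨m, hm, hmk, hlo, hhi⟩ : ∃ m ≤ N, m ≠ k ∧ min (k : ℕ) m ≤ l ∧ (l : ℕ) < max (k : ℕ) m := by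
    rcases le_or_gt (k : ℕ) l with h | h
    · exact ⟨l + 1, by omega, by omega, by omega, by omega⟩
    · exact ⟨l, by omega, by omega, by omega, by omega⟩
  refine ⟨E1Index.select (· ≠ m) (fun _ => False) True, by simpa using hmk.symm, by simp, ?_, ?_⟩
  · exact eq_top_of_zeta1_mem (zeta1_mem_span_E1vec (by simp)) hm
      fun j hj hjm => stdv_mem_span_E1vec hj (by simpa using hjm)
  · exact eq_top_of_sub_stdv_mem_of_ne hlo hhi (by omega)
      (fun j hj hjl => sub_stdv_mem_span_E1vec hj (by simp [Fin.ext_iff]; omega))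
      (stdv_mem_span_E1vec (by omega) (by simp [Fin.ext_iff]; omega))
      (stdv_mem_span_E1vec (by omega) (by simp [Fin.ext_iff]; omega))

theorem exists_splitsAt_inl_inr_inr (k : Fin (N + 1)) :
    ∃ S, SplitsAt (.inl k) (.inr (.inr ())) S := by
  refine ⟨E1Index.select (fun _ => True) (fun _ => False) False, by simp, by simp, ?_, ?_⟩
  · exact eq_top_of_forall_stdv_mem fun j hj => stdv_mem_span_E1vec hj (by simp)
  · exact eq_top_of_sub_stdv_mem (fun j hj => sub_stdv_mem_span_E1vec hj (by simp)) k.is_le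
      (stdv_mem_span_E1vec k.is_le (by simp))

theorem exists_splitsAt_inr_inl_inl (hN : 2 ≤ N) (k : Fin N) (l : Fin (N + 1)) :
    ∃ S, SplitsAt (.inr (.inl k)) (.inl l) S := by
  obtain ⟨m, p, q, hm, hml, hp, hqk, hqk', hq, hpq⟩ : ∃ m p q : ℕ, m ≤ N ∧ m ≠ l ∧
      (p = k ∨ p = k + 1) ∧ q ≠ k ∧ q ≠ k + 1 ∧ q ≤ N ∧
      ((p = l ∧ q = m) ∨ (p = m ∧ q = l)) := by
    by_cases hl : (l : ℕ) = k ∨ (l : ℕ) = k + 1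
    · by_cases hk : (k : ℕ) = 0
      · exact ⟨2, l, 2, hN, by omega, hl, by omega, by omega, hN, by omega⟩
      · exact ⟨0, l, 0, by omega, by omega, hl, by omega, by omega, by omega, by omega⟩
    · exact ⟨k, k, l, by omega, by omega, by omega, by omega, by omega, by omega, by omega⟩
  refine ⟨E1Index.select (· = m) (fun _ => True) False, by simp, by simpa using Ne.symm hml, ?_, ?_⟩
  · exact eq_top_of_sub_stdv_mem (fun j hj => sub_stdv_mem_span_E1vec hj (by simp)) hm
      (stdv_mem_span_E1vec hm (by simp))
  · exact eq_top_of_zeta1_mem_of_sub_stdv_mem (zeta1_mem_span_E1vec (by simp)) k.isLt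
      (sub_stdv_mem_span_E1vec k.isLt (by simp)) hp hqk hqk' hq
      fun j hj hjp hjq => stdv_mem_span_E1vec hj (by simp [Fin.ext_iff]; omega)

theorem exists_splitsAt_inr_inl_inr_inl {k l : Fin N} (hkl : k ≠ l) :
    ∃ S, SplitsAt (.inr (.inl k)) (.inr (.inl l)) S := by
  have hkl' : (k : ℕ) ≠ l := Fin.val_ne_of_ne hkl
  obtain ⟨m, hm, hmk, hmk', hlo, hhi⟩ : ∃ m ≤ N, m ≠ k ∧ m ≠ k + 1 ∧
      min (k : ℕ) m ≤ l ∧ (l : ℕ) < max (k : ℕ) m := by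
    rcases lt_or_gt_of_ne hkl' with h | h
    · exact ⟨l + 1, by omega, by omega, by omega, by omega, by omega⟩
    · exact ⟨l, by omega, by omega, by omega, by omega, by omega⟩
  refine ⟨E1Index.select (fun j => j ≠ k ∧ j ≠ m) (· = k) True, by simp,
    by simpa using hkl'.symm, ?_, ?_⟩
  · exact eq_top_of_zeta1_mem_of_sub_stdv_mem (zeta1_mem_span_E1vec (by simp)) k.isLt
      (sub_stdv_mem_span_E1vec k.isLt (by simp)) (.inl rfl) hmk hmk' hm
      fun j hj hjk hjm => stdv_mem_span_E1vec hj (by simp [hjk, hjm])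
  · exact eq_top_of_sub_stdv_mem_of_ne hlo hhi (by omega)
      (fun j hj hjl => sub_stdv_mem_span_E1vec hj (by simp [Fin.ext_iff]; omega))
      (stdv_mem_span_E1vec (by omega) (by simp; omega))
      (stdv_mem_span_E1vec (by omega) (by simp; omega))

theorem exists_splitsAt_inr_inl_inr_inr (k : Fin N) :
    ∃ S, SplitsAt (.inr (.inl k)) (.inr (.inr ())) S := by
  have hk : (k : ℕ) ≤ N := k.isLt.le
  refine ⟨E1Index.select (· = k) (fun _ => True) False, by simp, by simp, ?_, ?_⟩
  · exact eq_top_of_sub_stdv_mem (fun j hj => sub_stdv_mem_span_E1vec hj (by simp)) hk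
      (stdv_mem_span_E1vec hk (by simp))
  · refine eq_top_of_forall_stdv_mem fun j hj => ?_
    rcases eq_or_ne j k with rfl | hjk
    · simpa using add_mem (sub_stdv_mem_span_E1vec k.isLt (by simp))
        (stdv_mem_span_E1vec k.isLt (by simp))
    · exact stdv_mem_span_E1vec hj (by simp [hjk])

theorem exists_splitsAt_inr_inr_inl (hN : 2 ≤ N) (l : Fin (N + 1)) :
    ∃ S, SplitsAt (.inr (.inr ())) (.inl l) S := by
  obtain ⟨m, p, q, hm, hmN, hml, hp, hq, hqN, hpq⟩ : ∃ m p q : ℕ, 1 ≤ m ∧ m ≤ N ∧ m ≠ l ∧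
      (p = 0 ∨ p = 1) ∧ 2 ≤ q ∧ q ≤ N ∧ ((p = l ∧ q = m) ∨ (p = m ∧ q = l)) := by
    by_cases hl : (l : ℕ) ≤ 1
    · exact ⟨2, l, 2, by omega, hN, by omega, by omega, le_rfl, hN, by omega⟩
    · exact ⟨1, 1, l, le_rfl, by omega, by omega, by omega, by omega, by omega, by omega⟩
  refine ⟨E1Index.select (fun j => j ≠ p ∧ j ≠ q) (· = 0) True, by simp,
    by simp; omega, ?_, ?_⟩
  · exact eq_top_of_zeta1_mem_of_sub_stdv_mem (zeta1_mem_span_E1vec (by simp)) (k := 0)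
      (by omega) (sub_stdv_mem_span_E1vec (by omega) (by simp)) hp (by omega) (by omega) hqN
      fun j hj hjp hjq => stdv_mem_span_E1vec hj (by simp [hjp, hjq])
  · exact eq_top_of_zeta1_mem_of_sub_stdv_mem_of_pos (zeta1_mem_span_E1vec (by simp))
      (fun j hj hjN => sub_stdv_mem_span_E1vec hjN (by simp; omega)) hm hmN
      (stdv_mem_span_E1vec hmN (by simp [Fin.ext_iff]; omega))

theorem exists_splitsAt_inr_inr_inr_inl (hN : 2 ≤ N) (l : Fin N) :
    ∃ S, SplitsAt (.inr (.inr ())) (.inr (.inl l)) S := by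
  rcases Nat.eq_zero_or_pos l with hl | hl
  · refine ⟨E1Index.select (· ≠ 1) (fun _ => False) True, by simp, by simp, ?_, ?_⟩
    · exact eq_top_of_zeta1_mem (zeta1_mem_span_E1vec (by simp)) (m := 1) (by omega)
        fun j hj hj1 => stdv_mem_span_E1vec hj (by simpa using hj1)
    · exact eq_top_of_zeta1_mem_of_sub_stdv_mem_of_pos (zeta1_mem_span_E1vec (by simp))
        (fun j hj hjN => sub_stdv_mem_span_E1vec hjN (by simp [Fin.ext_iff]; omega)) le_rfl
        (by omega) (stdv_mem_span_E1vec (by omega) (by simp))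
  · refine ⟨E1Index.select (fun j => j ≠ 1 ∧ j ≠ l + 1) (· = 0) True, by simp,
      by simp; omega, ?_, ?_⟩
    · exact eq_top_of_zeta1_mem_of_sub_stdv_mem (zeta1_mem_span_E1vec (by simp)) (k := 0)
        (by omega) (sub_stdv_mem_span_E1vec (by omega) (by simp)) (.inr rfl) (by omega)
        (by omega) l.isLt fun j hj hj1 hjl => stdv_mem_span_E1vec hj (by simp [hj1, hjl])
    · refine eq_top_of_zeta1_mem (zeta1_mem_span_E1vec (by simp)) (Nat.zero_le N)
        fun j hj hj0 => ?_
      rcases le_or_gt j l with hjl | hjl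
      · exact Submodule.mem_of_sub_succ_mem (x := stdv N) le_rfl hl
          (fun i hi hil => sub_stdv_mem_span_E1vec (by omega) (by simp [Fin.ext_iff]; omega))
          (stdv_mem_span_E1vec (by omega) (by simp)) j (by omega) hjl
      · exact Submodule.mem_of_sub_succ_mem (x := stdv N) le_rfl l.isLt
          (fun i hi hiN => sub_stdv_mem_span_E1vec hiN (by simp [Fin.ext_iff]; omega))
          (stdv_mem_span_E1vec l.isLt (by simp)) j hjl hj

theorem exists_splitsAt (hN : 2 ≤ N) {a b : E1Index N} (hab : a ≠ b) : ∃ S, SplitsAt a b S := by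
  rcases a with k | k | ⟨⟩ <;> rcases b with l | l | ⟨⟩
  · exact exists_splitsAt_inl_inl fun h => hab (h ▸ rfl)
  · exact exists_splitsAt_inl_inr_inl k l
  · exact exists_splitsAt_inl_inr_inr k
  · exact exists_splitsAt_inr_inl_inl hN k l
  · exact exists_splitsAt_inr_inl_inr_inl fun h => hab (h ▸ rfl)
  · exact exists_splitsAt_inr_inl_inr_inr k
  · exact exists_splitsAt_inr_inr_inl hN l
  · exact exists_splitsAt_inr_inr_inr_inl hN l
  · exact absurd rfl hab

end Splits

/-- For every pair of distinct vectors `(v,w)` from `E₁` (with `N ≥ 2`) there are two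
bases `B₁, B₂ ⊆ E₁` of `ℝ^{N+1}` with `B₁ ∩ B₂ = {v}` and `E₁ \ (B₁ ∪ B₂) = {w}`. -/
theorem E1_basis_pairs (N : ℕ) (hN : 2 ≤ N) (v w : Fin (N + 1) → ℝ)
    (hv : v ∈ E1set N) (hw : w ∈ E1set N) (hvw : v ≠ w) :
    ∃ B₁ B₂ : Set (Fin (N + 1) → ℝ),
      B₁ ⊆ E1set N ∧ B₂ ⊆ E1set N ∧
      (LinearIndependent ℝ ((↑) : B₁ → (Fin (N + 1) → ℝ)) ∧ Submodule.span ℝ B₁ = ⊤) ∧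
      (LinearIndependent ℝ ((↑) : B₂ → (Fin (N + 1) → ℝ)) ∧ Submodule.span ℝ B₂ = ⊤) ∧
      B₁ ∩ B₂ = {v} ∧ E1set N \ (B₁ ∪ B₂) = {w} := by
  rw [← range_E1vec] at hv hw ⊢
  obtain ⟨a, rfl⟩ := hv
  obtain ⟨b, rfl⟩ := hw
  obtain ⟨S, ha, hb, hS, hT⟩ := exists_splitsAt hN (ne_of_apply_ne _ hvw)
  exact exists_basis_pair ℝ (E1vec_injective hN) nat_card_E1Index ha hb hS hT
end

section
/- Let $E \subset \mathbb{R}^{n}$ be a finite set of vectors and suppose that for every pair of distinct $v, w \in E$ there exist bases $B_1, B_2 \subset E$ of $\mathbb{R}^n$ with $B_1 \cap B_2 = \{v\}$ and $E \setminus (B_1 \cup B_2) = \{w\}$. Then the set $A = \{\theta : E \to [0,1] \mid \sum_{v \in E} |\theta(v) - 1/2| \le 1 \text{ and } \sum_{v \in E} \theta(v) = n\}$ is contained in the matroid polytope $\mathcal{P}(E)$, defined as the convex hull of $\{\chi_B : B \subset E \text{ is a basis of } \mathbb{R}^n\}$. -/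
open Finset

variable (n : ℕ)

/-- `B` is a basis of `ℝ^n` (a linearly independent spanning set). -/
def IsBasisSet (B : Finset (Fin n → ℝ)) : Prop :=
  LinearIndependent ℝ (fun x : (B : Set (Fin n → ℝ)) => (x : Fin n → ℝ)) ∧
    Submodule.span ℝ (B : Set (Fin n → ℝ)) = ⊤

/-- The indicator function of `B` viewed as an element of `E → ℝ`. -/
noncomputable def chiB (E B : Finset (Fin n → ℝ)) : E → ℝ :=
  fun v => if (v : Fin n → ℝ) ∈ B then 1 else 0

/-!
Writing `δ_v` for the unit vectors of `ℝ^E`, the hypothesis gives, for `v ≠ w`, the point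
`Φ_{v,w} = (χ_{B₁} + χ_{B₂}) / 2 = 1/2 + (δ_v - δ_w) / 2` of `𝒫(E)`, and the midpoint of
`Φ_{v,w}` and `Φ_{w,v}` is the constant `1/2`. For `θ ∈ A` the deviation `x = θ - 1/2` has sum
`0` (as `|E| = 2n`) and `ℓ¹`-norm at most `1`. Splitting `x = x⁺ - x⁻`, both parts have the same
mass `s ≤ 1/2`, and `s • x = ∑_{v,w} x⁺_v x⁻_w (δ_v - δ_w)`; this writes `θ` as a convex
combination of `1/2` and the `Φ_{v,w}`.
-/

section

variable {ι : Type*} [Fintype ι] [DecidableEq ι]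

theorem sum_mul_smul_single_sub_single {R : Type*} [CommRing R] (p m : ι → R) :
    ∑ vw : ι × ι, (p vw.1 * m vw.2) • (Pi.single vw.1 1 - Pi.single vw.2 1 : ι → R) =
      (∑ w, m w) • p - (∑ v, p v) • m := by
  ext u
  simp [Finset.sum_apply, Pi.single_apply, Fintype.sum_prod_type, mul_sub, Finset.sum_sub_distrib,
    ← Finset.sum_mul, ← Finset.mul_sum, mul_comm]

theorem Convex.add_mem_of_sum_eq_zero_of_sum_abs_le {C : Set (ι → ℝ)} (hC : Convex ℝ C)
    {c x : ι → ℝ} {r : ℝ} (hc : c ∈ C)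
    (hcr : ∀ v w, v ≠ w → c + r • (Pi.single v 1 - Pi.single w 1) ∈ C)
    (hx : ∑ i, x i = 0) (hxr : ∑ i, |x i| ≤ 2 * r) : c + x ∈ C := by
  set s := ∑ i, x⁺ i
  have hsm : ∑ i, x⁻ i = s := by
    have := congrArg (∑ i, · i) (posPart_sub_negPart x)
    simp only [Pi.sub_apply, Finset.sum_sub_distrib, hx] at this
    linarith
  have habs : ∑ i, |x i| = 2 * s := by
    calc ∑ i, |x i| = ∑ i, (x⁺ i + x⁻ i) :=
          Finset.sum_congr rfl fun i _ => (posPart_add_negPart (x i)).symm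
      _ = 2 * s := by rw [Finset.sum_add_distrib, hsm]; ring
  have hs0 : 0 ≤ s := Finset.sum_nonneg fun i _ => posPart_nonneg (x i)
  rcases hs0.eq_or_lt with hs | hs
  · have hx0 : x = 0 := by
      ext i
      simpa using (Finset.sum_eq_zero_iff_of_nonneg fun i _ => abs_nonneg (x i)).mp
        (by rw [habs, ← hs]; ring) i (Finset.mem_univ i)
    simpa [hx0] using hc
  have hr : 0 < r := by linarith
  have hweights : ∑ vw : ι × ι, x⁺ vw.1 * x⁻ vw.2 / s ^ 2 = 1 := by
    rw [← Finset.sum_div, Fintype.sum_prod_type, ← Fintype.sum_mul_sum, hsm]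
    field_simp
    rfl
  set y := ∑ vw : ι × ι,
    (x⁺ vw.1 * x⁻ vw.2 / s ^ 2) • (c + r • (Pi.single vw.1 1 - Pi.single vw.2 1))
  have hyC : y ∈ C := by
    refine hC.sum_mem (fun vw _ => ?_) hweights fun vw _ => ?_
    · exact div_nonneg (mul_nonneg (posPart_nonneg _) (negPart_nonneg _)) (sq_nonneg s)
    · by_cases hvw : vw.1 = vw.2
      · simpa [hvw] using hc
      · exact hcr _ _ hvw
  have hy : y = c + (r / s) • x := calc
    y = (∑ vw : ι × ι, x⁺ vw.1 * x⁻ vw.2 / s ^ 2) • c + (r / s ^ 2) •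
        ∑ vw : ι × ι, (x⁺ vw.1 * x⁻ vw.2) • (Pi.single vw.1 1 - Pi.single vw.2 1 : ι → ℝ) := by
      rw [Finset.sum_smul, Finset.smul_sum, ← Finset.sum_add_distrib]
      exact Finset.sum_congr rfl fun vw _ => by module
    _ = c + (r / s ^ 2) • (s • x⁺ - s • x⁻) := by
      rw [hweights, one_smul, sum_mul_smul_single_sub_single, hsm]
    _ = c + (r / s) • x := by
      rw [← smul_sub, posPart_sub_negPart, smul_smul]
      congr 2
      field_simp
  have hcx : c + x = (1 - s / r) • c + (s / r) • y := by
    rw [hy, smul_add, smul_smul, div_mul_div_cancel₀ hr.ne', div_self hs.ne', one_smul]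
    module
  rw [hcx]
  exact hC hc hyC (sub_nonneg.2 ((div_le_one hr).2 (by linarith))) (by positivity) (by ring)

end

theorem ite_mem_add_ite_mem_eq {α R : Type*} [DecidableEq α] [Ring R] {E B₁ B₂ : Finset α}
    {u v w : α} (hinter : B₁ ∩ B₂ = {v}) (hdiff : E \ (B₁ ∪ B₂) = {w}) (hu : u ∈ E) :
    ((if u ∈ B₁ then 1 else 0) + (if u ∈ B₂ then 1 else 0) : R) =
      1 + (if u = v then 1 else 0) - (if u = w then 1 else 0) := by
  have hv := Finset.ext_iff.mp hinter
  have hw := Finset.ext_iff.mp hdiff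
  simp only [Finset.mem_inter, Finset.mem_sdiff, Finset.mem_union, Finset.mem_singleton] at hv hw
  split_ifs <;> grind

def matroidPolytope (E : Finset (Fin n → ℝ)) : Set (E → ℝ) :=
  convexHull ℝ {χ : E → ℝ | ∃ B : Finset (Fin n → ℝ), B ⊆ E ∧ IsBasisSet n B ∧ χ = chiB n E B}

theorem isBasisSet_empty : IsBasisSet 0 ∅ :=
  ⟨by rw [Finset.coe_empty]; exact linearIndependent_empty ℝ _, Subsingleton.elim _ _⟩

section

variable {n}

theorem convex_matroidPolytope (E : Finset (Fin n → ℝ)) : Convex ℝ (matroidPolytope n E) :=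
  convex_convexHull ℝ _

theorem chiB_mem_matroidPolytope {E B : Finset (Fin n → ℝ)} (hBE : B ⊆ E) (hB : IsBasisSet n B) :
    chiB n E B ∈ matroidPolytope n E :=
  subset_convexHull ℝ _ ⟨B, hBE, hB, rfl⟩

theorem chiB_add_chiB {E B₁ B₂ : Finset (Fin n → ℝ)} {v w : E}
    (hinter : B₁ ∩ B₂ = {(v : Fin n → ℝ)}) (hdiff : E \ (B₁ ∪ B₂) = {(w : Fin n → ℝ)}) :
    chiB n E B₁ + chiB n E B₂ = 1 + Pi.single v 1 - Pi.single w 1 := by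
  ext u
  simp only [chiB, Pi.add_apply, Pi.sub_apply, Pi.one_apply, Pi.single_apply, ← Subtype.val_inj]
  exact ite_mem_add_ite_mem_eq hinter hdiff u.2

theorem half_add_smul_single_sub_single_mem_matroidPolytope {E B₁ B₂ : Finset (Fin n → ℝ)}
    {v w : E} (hB₁E : B₁ ⊆ E) (hB₂E : B₂ ⊆ E) (hB₁ : IsBasisSet n B₁) (hB₂ : IsBasisSet n B₂)
    (hinter : B₁ ∩ B₂ = {(v : Fin n → ℝ)}) (hdiff : E \ (B₁ ∪ B₂) = {(w : Fin n → ℝ)}) :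
    (1 / 2 : ℝ) • 1 + (1 / 2 : ℝ) • (Pi.single v 1 - Pi.single w 1) ∈ matroidPolytope n E := by
  have hmid := convex_matroidPolytope E (chiB_mem_matroidPolytope hB₁E hB₁)
    (chiB_mem_matroidPolytope hB₂E hB₂) (by norm_num : (0 : ℝ) ≤ 1 / 2)
    (by norm_num : (0 : ℝ) ≤ 1 / 2) (by norm_num)
  rw [← smul_add, chiB_add_chiB hinter hdiff] at hmid
  convert hmid using 1
  module

theorem half_mem_matroidPolytope {E : Finset (Fin n → ℝ)} (hcard : E.card = 2 * n)
    (hpairs : ∀ v w : E, v ≠ w →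
      (1 / 2 : ℝ) • 1 + (1 / 2 : ℝ) • (Pi.single v 1 - Pi.single w 1) ∈ matroidPolytope n E) :
    (1 / 2 : ℝ) • 1 ∈ matroidPolytope n E := by
  rcases n.eq_zero_or_pos with rfl | hn
  · obtain rfl : E = ∅ := Finset.card_eq_zero.mp hcard
    have h := chiB_mem_matroidPolytope (Finset.empty_subset ∅) isBasisSet_empty
    rwa [Subsingleton.elim (chiB 0 ∅ ∅) ((1 / 2 : ℝ) • 1)] at h
  obtain ⟨a, b, hab⟩ : ∃ a b : E, a ≠ b := by
    rw [← Fintype.one_lt_card_iff, Fintype.card_coe]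
    omega
  have hmid := convex_matroidPolytope E (hpairs a b hab) (hpairs b a hab.symm)
    (by norm_num : (0 : ℝ) ≤ 1 / 2) (by norm_num : (0 : ℝ) ≤ 1 / 2) (by norm_num)
  convert hmid using 1
  module

end

/-- If for every pair of distinct `v, w ∈ E` there are bases `B₁, B₂ ⊆ E` with
`B₁ ∩ B₂ = {v}` and `E \ (B₁ ∪ B₂) = {w}` (and `|E| = 2n`), then the set
`A = {θ : E → [0,1] : ∑ |θ(v) - 1/2| ≤ 1, ∑ θ(v) = n}` is contained in the matroid
polytope `𝒫(E)`, the convex hull of the indicators of bases contained in `E`. -/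
theorem A_subset_matroid_polytope (E : Finset (Fin n → ℝ)) (hcard : E.card = 2 * n)
    (hpairs : ∀ v ∈ E, ∀ w ∈ E, v ≠ w →
      ∃ B₁ B₂ : Finset (Fin n → ℝ), B₁ ⊆ E ∧ B₂ ⊆ E ∧
        IsBasisSet n B₁ ∧ IsBasisSet n B₂ ∧
        B₁ ∩ B₂ = {v} ∧ E \ (B₁ ∪ B₂) = {w}) :
    {θ : E → ℝ | (∀ v, θ v ∈ Set.Icc (0 : ℝ) 1) ∧
        (∑ v : E, |θ v - 1 / 2| ≤ 1) ∧ (∑ v : E, θ v = n)}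
      ⊆ convexHull ℝ
          {χ : E → ℝ | ∃ B : Finset (Fin n → ℝ), B ⊆ E ∧ IsBasisSet n B ∧ χ = chiB n E B} := by
  rintro θ ⟨-, habs, hsum⟩
  have hΦ : ∀ v w : E, v ≠ w →
      (1 / 2 : ℝ) • 1 + (1 / 2 : ℝ) • (Pi.single v 1 - Pi.single w 1) ∈ matroidPolytope n E := by
    intro v w hvw
    obtain ⟨B₁, B₂, hB₁E, hB₂E, hB₁, hB₂, hinter, hdiff⟩ :=
      hpairs v v.2 w w.2 (Subtype.val_injective.ne hvw)
    exact half_add_smul_single_sub_single_mem_matroidPolytope hB₁E hB₂E hB₁ hB₂ hinter hdiff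
  have hdev : ∑ v : E, (θ - (1 / 2 : ℝ) • 1) v = 0 := by
    simp only [Pi.sub_apply, Finset.sum_sub_distrib, hsum]
    simp [hcard]
    ring
  show θ ∈ matroidPolytope n E
  simpa using (convex_matroidPolytope E).add_mem_of_sum_eq_zero_of_sum_abs_le
    (half_mem_matroidPolytope hcard hΦ) hΦ hdev (by simpa using habs)
end
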